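/- arXiv:1612.06596 — 5 statements merged into one kernel-verified Lean document; each statement's English description precedes it below -/
import Mathlib

section
/- Let Q(r) = 1 - 1/r - 1/(2r^2) and L(u,r) = (1 - 1/r) u''(r) + (1/r^2) u'(r) + (1/r^2) u(r)(1 - u(r)^2). Then for all r ≥ 3, L(Q, r) = -2/r^4 + 2/r^5 + 3/(4 r^6) + 3/(4 r^7) + 1/(8 r^8) ≤ -1/r^4 < 0. -/
/-!
Differentiating `Q = 1 - r⁻¹ - r⁻² / 2` twice gives `Q' = r⁻² + r⁻³` and `Q'' = -2 r⁻³ - 3 r⁻⁴`,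
and substituting into the operator is a rational-function identity. The bound reduces, after
multiplying by `8 r⁸`, to `8 r⁴ - 16 r³ - 6 r² - 6 r - 1 ≥ 0`, which holds for `r ≥ 3` because
`8 r⁴ - 16 r³ ≥ 8 r³ ≥ 24 r²` there.
-/

open Real Filter Topology

theorem deriv_deriv_eq_of_eventually_hasDerivAt {𝕜 F : Type*} [NontriviallyNormedField 𝕜]
    [NormedAddCommGroup F] [NormedSpace 𝕜 F] {f f' : 𝕜 → F} {a : F} {r : 𝕜}
    (hf : ∀ᶠ x in 𝓝 r, HasDerivAt f (f' x) x) (hf' : HasDerivAt f' a r) :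
    deriv (deriv f) r = a := by
  have h : deriv f =ᶠ[𝓝 r] f' := hf.mono fun _ hx => hx.deriv
  rw [h.deriv_eq, hf'.deriv]

theorem hasDerivAt_one_sub_inv_sub_inv_two_mul_sq {x : ℝ} (hx : x ≠ 0) :
    HasDerivAt (fun x : ℝ => 1 - 1 / x - 1 / (2 * x ^ 2)) (1 / x ^ 2 + 1 / x ^ 3) x := by
  simp only [one_div]
  refine (((hasDerivAt_const x (1 : ℝ)).fun_sub (hasDerivAt_inv hx)).fun_sub
    (((hasDerivAt_pow 2 x).const_mul (2 : ℝ)).fun_inv (by positivity))).congr_deriv ?_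
  field_simp
  ring

theorem hasDerivAt_inv_sq_add_inv_cube {x : ℝ} (hx : x ≠ 0) :
    HasDerivAt (fun x : ℝ => 1 / x ^ 2 + 1 / x ^ 3) (-2 / x ^ 3 - 3 / x ^ 4) x := by
  simp only [one_div, ← inv_pow]
  refine (((hasDerivAt_inv hx).fun_pow 2).fun_add ((hasDerivAt_inv hx).fun_pow 3)).congr_deriv ?_
  simp only [Nat.cast_ofNat, Nat.add_one_sub_one, pow_one, inv_pow]
  field_simp
  ring

theorem sixteen_mul_cube_add_le_eight_mul_pow_four {r : ℝ} (hr : 3 ≤ r) :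
    16 * r ^ 3 + 6 * r ^ 2 + 6 * r + 1 ≤ 8 * r ^ 4 := by
  nlinarith [sq_nonneg r, mul_nonneg (sub_nonneg.2 hr) (sq_nonneg r),
    mul_nonneg (sub_nonneg.2 hr) (pow_nonneg (by linarith : (0 : ℝ) ≤ r) 3)]

theorem supersolution_Q
    (Q : ℝ → ℝ) (hQ : ∀ r, Q r = 1 - 1 / r - 1 / (2 * r ^ 2)) :
    ∀ r : ℝ, 3 ≤ r →
      (1 - 1 / r) * deriv (deriv Q) r + (1 / r ^ 2) * deriv Q r
          + (1 / r ^ 2) * Q r * (1 - (Q r) ^ 2)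
        = -2 / r ^ 4 + 2 / r ^ 5 + 3 / (4 * r ^ 6) + 3 / (4 * r ^ 7) + 1 / (8 * r ^ 8) ∧
      -2 / r ^ 4 + 2 / r ^ 5 + 3 / (4 * r ^ 6) + 3 / (4 * r ^ 7) + 1 / (8 * r ^ 8)
        ≤ -1 / r ^ 4 ∧
      -1 / r ^ 4 < 0 := by
  obtain rfl : Q = fun x => 1 - 1 / x - 1 / (2 * x ^ 2) := funext hQ
  intro r hr
  have hr0 : 0 < r := by linarith
  have hQ' : deriv (fun x : ℝ => 1 - 1 / x - 1 / (2 * x ^ 2)) r = 1 / r ^ 2 + 1 / r ^ 3 :=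
    (hasDerivAt_one_sub_inv_sub_inv_two_mul_sq hr0.ne').deriv
  have hQ'' : deriv (deriv fun x : ℝ => 1 - 1 / x - 1 / (2 * x ^ 2)) r = -2 / r ^ 3 - 3 / r ^ 4 :=
    deriv_deriv_eq_of_eventually_hasDerivAt
      ((eventually_ne_nhds hr0.ne').mono fun _ => hasDerivAt_one_sub_inv_sub_inv_two_mul_sq)
      (hasDerivAt_inv_sq_add_inv_cube hr0.ne')
  refine ⟨?_, ?_, div_neg_of_neg_of_pos (by norm_num) (by positivity)⟩
  · rw [hQ', hQ'']
    field_simp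
    ring
  · rw [← sub_nonpos]
    have hdiff : -2 / r ^ 4 + 2 / r ^ 5 + 3 / (4 * r ^ 6) + 3 / (4 * r ^ 7) + 1 / (8 * r ^ 8)
        - -1 / r ^ 4 = (16 * r ^ 3 + 6 * r ^ 2 + 6 * r + 1 - 8 * r ^ 4) / (8 * r ^ 8) := by
      field_simp
      ring
    rw [hdiff]
    exact div_nonpos_of_nonpos_of_nonneg (sub_nonpos.2 (sixteen_mul_cube_add_le_eight_mul_pow_four hr))
      (by positivity)
end

section
/- Let W : [1, r_0] → ℝ be a C^2 solution of (1 - 1/r) W'' + (1/r^2) W' + (1/r^2) W(1 - W^2) = 0 with W(1) = a, W'(1) = -a(1-a^2), for some 0 < a ≤ 1, and suppose |W| ≤ B on [1, r_0] for some 0 < B ≤ 1. Then |W'(r)| ≤ B for all r ∈ [1, r_0]. -/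
open Real Set Filter Topology

/-!
Put `V r = (1 - 1/r) W'(r)`. The equation says `V' = -W (1 - W²) / r²`, and
`|W (1 - W²)| ≤ |W| ≤ B` because `|W| ≤ B ≤ 1`; hence `|V'| ≤ B / r² = (B (1 - 1/r))'`.
Since `V 1 = 0`, integrating gives `|V r| ≤ B (1 - 1/r)`, i.e. `|W' r| ≤ B` for `r > 1`.
At the singular point `r = 1` the equation itself reads `W'(1) = -W(1) (1 - W(1)²)`.
-/

theorem abs_sub_le_sub_of_abs_deriv_le {f g f' g' : ℝ → ℝ} {a b : ℝ} (hab : a ≤ b)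
    (hf : ContinuousOn f (Icc a b)) (hg : ContinuousOn g (Icc a b))
    (hf' : ∀ x ∈ Ioo a b, HasDerivAt f (f' x) x)
    (hg' : ∀ x ∈ Ioo a b, HasDerivAt g (g' x) x)
    (bound : ∀ x ∈ Ioo a b, |f' x| ≤ g' x) :
    |f b - f a| ≤ g b - g a := by
  have mono : ∀ σ : ℝ, |σ| ≤ 1 → MonotoneOn (fun x => g x - σ * f x) (Icc a b) := by
    intro σ hσ
    refine monotoneOn_of_hasDerivWithinAt_nonneg (convex_Icc a b)
      (hg.sub (continuousOn_const.mul hf)) (f' := fun x => g' x - σ * f' x) ?_ ?_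
    · rw [interior_Icc]
      exact fun x hx => ((hg' x hx).sub ((hf' x hx).const_mul σ)).hasDerivWithinAt
    · rw [interior_Icc]
      intro x hx
      have : |σ * f' x| ≤ g' x := by
        rw [abs_mul]
        nlinarith [abs_nonneg σ, abs_nonneg (f' x), bound x hx]
      linarith [le_abs_self (σ * f' x)]
  have ha : a ∈ Icc a b := left_mem_Icc.2 hab
  have hb : b ∈ Icc a b := right_mem_Icc.2 hab
  have hsub := mono 1 (by norm_num) ha hb hab
  have hadd := mono (-1) (by norm_num) ha hb hab
  simp only at hsub hadd
  rw [abs_sub_le_iff]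
  constructor <;> linarith

section Deriv

variable {𝕜 F : Type*} [NontriviallyNormedField 𝕜] [NormedAddCommGroup F] [NormedSpace 𝕜 F]
  {f : 𝕜 → F} {s : Set 𝕜} {x : 𝕜}

theorem ContDiffOn.hasDerivAt_derivWithin (hf : ContDiffOn 𝕜 2 f s) (hs : UniqueDiffOn 𝕜 s)
    (hx : s ∈ 𝓝 x) : HasDerivAt (derivWithin f s) (deriv (deriv f) x) x := by
  have hdiff : DifferentiableAt 𝕜 (derivWithin f s) x :=
    ((hf.derivWithin hs (m := 1) (by norm_num)).differentiableOn one_ne_zero).differentiableAt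
      hx
  have heq : derivWithin f s =ᶠ[𝓝 x] deriv f := by
    filter_upwards [eventually_mem_nhds_iff.2 hx] with y hy using derivWithin_of_mem_nhds hy
  rw [← heq.deriv_eq]
  exact hdiff.hasDerivAt

theorem norm_deriv_le_of_norm_derivWithin_le {B : ℝ} (hs : UniqueDiffWithinAt 𝕜 s x)
    (hB : 0 ≤ B) (h : ‖derivWithin f s x‖ ≤ B) : ‖deriv f x‖ ≤ B := by
  by_cases hdiff : DifferentiableAt 𝕜 f x
  · rwa [← hdiff.derivWithin hs]
  · rwa [deriv_zero_of_not_differentiableAt hdiff, norm_zero]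

end Deriv

theorem abs_mul_one_sub_sq_le {w B : ℝ} (hw : |w| ≤ B) (hB : B ≤ 1) :
    |w * (1 - w ^ 2)| ≤ B := by
  have hw2 : w ^ 2 ≤ 1 := by nlinarith [sq_abs w, abs_nonneg w]
  rw [abs_mul, abs_of_nonneg (by linarith : (0:ℝ) ≤ 1 - w ^ 2)]
  nlinarith [abs_nonneg w, sq_nonneg w]

section YangMills

variable {W : ℝ → ℝ} {r0 B : ℝ}

theorem hasDerivAt_one_sub_inv_mul_derivWithin (hreg : ContDiffOn ℝ 2 W (Icc 1 r0)) {r : ℝ}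
    (hr : r ∈ Ioo 1 r0)
    (hode : (1 - 1 / r) * deriv (deriv W) r + (1 / r ^ 2) * deriv W r
        + (1 / r ^ 2) * W r * (1 - (W r) ^ 2) = 0) :
    HasDerivAt (fun s => (1 - s⁻¹) * derivWithin W (Icc 1 r0) s)
      (-(W r * (1 - W r ^ 2)) / r ^ 2) r := by
  have hr0 : r ≠ 0 := (one_pos.trans hr.1).ne'
  have hnhds : Icc 1 r0 ∈ 𝓝 r := Icc_mem_nhds hr.1 hr.2
  refine (HasDerivAt.mul ((hasDerivAt_inv hr0).const_sub 1)
    (hreg.hasDerivAt_derivWithin (uniqueDiffOn_Icc (hr.1.trans hr.2)) hnhds)).congr_deriv ?_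
  rw [derivWithin_of_mem_nhds hnhds]
  field_simp at hode ⊢
  linear_combination hode

theorem abs_derivWithin_le_of_ode (hB1 : B ≤ 1) (hreg : ContDiffOn ℝ 2 W (Icc 1 r0))
    (hode : ∀ r ∈ Icc (1:ℝ) r0,
      (1 - 1 / r) * deriv (deriv W) r + (1 / r ^ 2) * deriv W r
        + (1 / r ^ 2) * W r * (1 - (W r) ^ 2) = 0)
    (hbd : ∀ r ∈ Icc (1:ℝ) r0, |W r| ≤ B) {r : ℝ} (hr : r ∈ Ioc 1 r0) :
    |derivWithin W (Icc 1 r0) r| ≤ B := by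
  -- the one-sided derivative keeps `V` continuous up to the endpoint `r = 1`
  set V := fun s => (1 - s⁻¹) * derivWithin W (Icc 1 r0) s
  have hsub : Icc 1 r ⊆ Icc 1 r0 := Icc_subset_Icc_right hr.2
  have hinv : ContinuousOn (fun s : ℝ => 1 - s⁻¹) (Icc 1 r) :=
    continuousOn_const.sub (continuousOn_inv₀.mono fun s hs => (one_pos.trans_le hs.1).ne')
  have hV : ContinuousOn V (Icc 1 r) :=
    hinv.mul ((hreg.continuousOn_derivWithin (uniqueDiffOn_Icc (hr.1.trans_le hr.2))
      one_le_two).mono hsub)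
  have hflux := abs_sub_le_sub_of_abs_deriv_le (g := fun s => B * (1 - s⁻¹)) hr.1.le hV
    (continuousOn_const.mul hinv)
    (fun s hs => hasDerivAt_one_sub_inv_mul_derivWithin hreg ⟨hs.1, hs.2.trans_le hr.2⟩
      (hode s (Ioo_subset_Icc_self (Ioo_subset_Ioo_right hr.2 hs))))
    (fun s hs => (((hasDerivAt_inv (one_pos.trans hs.1).ne').const_sub 1).const_mul B))
    (fun s hs => ?_)
  · have hpos : 0 < 1 - r⁻¹ := sub_pos.2 (inv_lt_one_of_one_lt₀ hr.1)
    simp only [V, inv_one, sub_self, zero_mul, mul_zero, sub_zero] at hflux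
    rw [abs_mul, abs_of_pos hpos, mul_comm B] at hflux
    exact le_of_mul_le_mul_left hflux hpos
  · have hs2 : 0 < s ^ 2 := pow_pos (one_pos.trans hs.1) 2
    rw [neg_neg, abs_div, abs_neg, abs_of_pos hs2, ← div_eq_mul_inv]
    exact div_le_div_of_nonneg_right
      (abs_mul_one_sub_sq_le (hbd s (hsub (Ioo_subset_Icc_self hs))) hB1) hs2.le

end YangMills

theorem deriv_bound_of_solution_general
    (W : ℝ → ℝ) (r0 B : ℝ)
    (hB1 : B ≤ 1)
    (hreg : ContDiffOn ℝ 2 W (Icc 1 r0))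
    (hode : ∀ r ∈ Icc (1:ℝ) r0,
      (1 - 1 / r) * deriv (deriv W) r + (1 / r ^ 2) * deriv W r
        + (1 / r ^ 2) * W r * (1 - (W r) ^ 2) = 0)
    (hbd : ∀ r ∈ Icc (1:ℝ) r0, |W r| ≤ B) :
    ∀ r ∈ Icc (1:ℝ) r0, |deriv W r| ≤ B := by
  intro r hr
  rcases hr.1.eq_or_lt with rfl | h1r
  · have hode1 : deriv W 1 = -(W 1 * (1 - W 1 ^ 2)) := by
      linear_combination (by simpa using hode 1 hr : deriv W 1 + W 1 * (1 - W 1 ^ 2) = 0)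
    rw [hode1, abs_neg]
    exact abs_mul_one_sub_sq_le (hbd 1 hr) hB1
  · exact norm_deriv_le_of_norm_derivWithin_le (f := W)
      (uniqueDiffOn_Icc (h1r.trans_le hr.2) r hr) ((abs_nonneg _).trans (hbd r hr))
      (abs_derivWithin_le_of_ode hB1 hreg hode hbd ⟨h1r, hr.2⟩)

theorem deriv_bound_of_solution
    (W : ℝ → ℝ) (r0 a B : ℝ) (hr0 : 1 ≤ r0)
    (ha : 0 < a) (ha1 : a ≤ 1) (hB : 0 < B) (hB1 : B ≤ 1)
    (hreg : ContDiffOn ℝ 2 W (Icc 1 r0))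
    (hode : ∀ r ∈ Icc (1:ℝ) r0,
      (1 - 1 / r) * deriv (deriv W) r + (1 / r ^ 2) * deriv W r
        + (1 / r ^ 2) * W r * (1 - (W r) ^ 2) = 0)
    (hW1 : W 1 = a) (hW1' : deriv W 1 = -a * (1 - a ^ 2))
    (hbd : ∀ r ∈ Icc (1:ℝ) r0, |W r| ≤ B) :
    ∀ r ∈ Icc (1:ℝ) r0, |deriv W r| ≤ B :=
  deriv_bound_of_solution_general W r0 B hB1 hreg hode hbd
end

section
/- Let W be a C^2 solution of (1 - 1/r) W'' + (1/r^2) W' + (1/r^2) W(1 - W^2) = 0 on an interval I ⊂ (1, ∞) with |W| < 1 on I. Then W cannot attain a local minimum at an interior point r_0 of I with W(r_0) > 0, nor a local maximum at an interior point with W(r_0) < 0. -/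
open Real Set

private lemma aux_no_min
    (W : ℝ → ℝ) (I : Set ℝ) (hI : I ⊆ Ioi 1)
    (hreg : ContDiffOn ℝ 2 W I)
    (hode : ∀ r ∈ I,
      (1 - 1 / r) * deriv (deriv W) r + (1 / r ^ 2) * deriv W r
        + (1 / r ^ 2) * W r * (1 - (W r) ^ 2) = 0)
    (hbd : ∀ r ∈ I, |W r| < 1)
    (r0 : ℝ) (hr0 : r0 ∈ interior I) (hmin : IsLocalMin W r0) (hpos : 0 < W r0) :
    False := by
  set U := interior I with hU
  have hUopen : IsOpen U := isOpen_interior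
  have hUI : U ⊆ I := interior_subset
  have hr0I : r0 ∈ I := hUI hr0
  have hr0gt : (1:ℝ) < r0 := hI hr0I
  have hWreg : ContDiffOn ℝ 2 W U := hreg.mono hUI
  have hW1 : ContDiffOn ℝ 1 (deriv W) U :=
    hWreg.deriv_of_isOpen hUopen (by norm_num)
  have hW0 : ContDiffOn ℝ 0 (deriv (deriv W)) U :=
    hW1.deriv_of_isOpen hUopen (by norm_num)
  have hcont2 : ContinuousAt (deriv (deriv W)) r0 :=
    (hW0.continuousOn.continuousAt (hUopen.mem_nhds hr0))
  have hd0 : deriv W r0 = 0 := hmin.deriv_eq_zero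
  -- second derivative negative at r0
  have hb : |W r0| < 1 := hbd r0 hr0I
  have hsq : (W r0) ^ 2 < 1 := by
    have := abs_lt.mp hb
    nlinarith [this.1, this.2]
  have hr0pos : (0:ℝ) < r0 := by linarith
  have hfac : (0:ℝ) < 1 - 1 / r0 := by
    have : 1 / r0 < 1 := by
      rw [div_lt_one hr0pos]; exact hr0gt
    linarith
  have hD2 : deriv (deriv W) r0 < 0 := by
    have heq := hode r0 hr0I
    rw [hd0] at heq
    have hterm : 0 < (1 / r0 ^ 2) * W r0 * (1 - (W r0) ^ 2) := by
      have h1 : (0:ℝ) < 1 / r0 ^ 2 := by positivity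
      have h2 : (0:ℝ) < 1 - (W r0) ^ 2 := by linarith
      positivity
    nlinarith [heq, hterm, hfac]
  -- get ε-ball where second derivative is negative and inside U
  have hev : ∀ᶠ x in nhds r0, deriv (deriv W) x < 0 ∧ x ∈ U := by
    filter_upwards [hcont2.eventually_lt_const hD2, hUopen.mem_nhds hr0] with x h1 h2
    exact ⟨h1, h2⟩
  obtain ⟨ε, hεpos, hball⟩ := Metric.eventually_nhds_iff_ball.mp hev
  set b := r0 + ε / 2 with hbdef
  have hr0b : r0 < b := by simp [hbdef]; linarith
  have hIccball : Icc r0 b ⊆ Metric.ball r0 ε := by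
    intro x hx
    rw [Metric.mem_ball, Real.dist_eq, abs_lt]
    constructor <;> [linarith [hx.1]; skip]
    have := hx.2
    simp only [hbdef] at this
    linarith
  have hIccU : Icc r0 b ⊆ U := fun x hx => (hball x (hIccball hx)).2
  -- deriv W strictly decreasing on Icc r0 b
  have hanti1 : StrictAntiOn (deriv W) (Icc r0 b) := by
    apply strictAntiOn_of_deriv_neg (convex_Icc r0 b)
    · exact hW1.continuousOn.mono hIccU
    · intro x hx
      rw [interior_Icc] at hx
      exact (hball x (hIccball ⟨le_of_lt hx.1, le_of_lt hx.2⟩)).1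
  have hderneg : ∀ x ∈ Ioo r0 b, deriv W x < 0 := by
    intro x hx
    have := hanti1 (left_mem_Icc.mpr hr0b.le) ⟨hx.1.le, hx.2.le⟩ hx.1
    rw [hd0] at this
    exact this
  -- W strictly decreasing on Icc r0 b
  have hanti2 : StrictAntiOn W (Icc r0 b) := by
    apply strictAntiOn_of_deriv_neg (convex_Icc r0 b)
    · exact hWreg.continuousOn.mono hIccU
    · intro x hx
      rw [interior_Icc] at hx
      exact hderneg x hx
  -- contradiction with local min
  have hmin' : ∀ᶠ x in nhdsWithin r0 (Ioi r0), W r0 ≤ W x :=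
    (hmin.filter_mono nhdsWithin_le_nhds)
  have hmem : Ioc r0 b ∈ nhdsWithin r0 (Ioi r0) := Ioc_mem_nhdsGT_of_mem ⟨le_refl r0, hr0b⟩
  have : ∀ᶠ x in nhdsWithin r0 (Ioi r0), W r0 ≤ W x ∧ x ∈ Ioc r0 b :=
    hmin'.and hmem
  obtain ⟨x, hx1, hx2⟩ := this.exists
  have : W x < W r0 := hanti2 (left_mem_Icc.mpr hr0b.le) ⟨hx2.1.le, hx2.2⟩ hx2.1
  linarith

theorem no_positive_min_no_negative_max
    (W : ℝ → ℝ) (I : Set ℝ) (hI : I ⊆ Ioi 1)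
    (hreg : ContDiffOn ℝ 2 W I)
    (hode : ∀ r ∈ I,
      (1 - 1 / r) * deriv (deriv W) r + (1 / r ^ 2) * deriv W r
        + (1 / r ^ 2) * W r * (1 - (W r) ^ 2) = 0)
    (hbd : ∀ r ∈ I, |W r| < 1) :
    ∀ r0 ∈ interior I,
      ¬ (IsLocalMin W r0 ∧ 0 < W r0) ∧ ¬ (IsLocalMax W r0 ∧ W r0 < 0) := by
  intro r0 hr0
  constructor
  · rintro ⟨hmin, hpos⟩
    exact aux_no_min W I hI hreg hode hbd r0 hr0 hmin hpos
  · rintro ⟨hmax, hneg⟩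
    -- apply the min lemma to -W
    have hderneg : deriv (fun x => -W x) = fun x => -deriv W x := by
      funext x; exact deriv.neg
    refine aux_no_min (fun x => -W x) I hI hreg.neg ?_ ?_ r0 hr0 hmax.neg (by simpa using hneg)
    · intro r hr
      have h2 : deriv (deriv fun x => -W x) r = -deriv (deriv W) r := by
        rw [hderneg]
        exact deriv.neg
      have := hode r hr
      rw [h2, hderneg]
      ring_nf
      ring_nf at this
      linarith
    · intro r hr
      simpa [abs_neg] using hbd r hr
end

section
/- Let W be a C^2 solution on [r_1, ∞) ⊂ (1, ∞) of (1 - 1/r) W'' + (1/r^2) W' + (1/r^2) W(1 - W^2) = 0 with |W| ≤ 1, and suppose W(r) → l as r → ∞. Then l ∈ {-1, 0, 1}. -/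
/-!
The equation is in divergence form: the flux `p = (1 - 1/r) W'` satisfies
`p' = -W (1 - W²) / r²`. If `l (1 - l²) = 2k > 0`, then eventually `p' ≤ -k / r²`, so `p` is
decreasing. Either `p` becomes negative, and then `W' ≤ p` stays below a negative constant,
so `W → -∞`; or `p ≥ 0` throughout, and integrating `p' ≤ -k / r²` from `r` to `∞` gives
`W' ≥ p ≥ k / r`, so `W ≥ k log r + C → ∞`. Both contradict `W → l`, hence
`l (1 - l²) ≤ 0`. Applying this also to the solution `-W` gives `l (1 - l²) = 0`.
-/

open Real Set Filter Topology

section Monotonicity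

variable {f f' : ℝ → ℝ} {a : ℝ}

theorem monotoneOn_Ici_of_hasDerivAt_nonneg (hf : ∀ x ∈ Ici a, HasDerivAt f (f' x) x)
    (hf' : ∀ x ∈ Ioi a, 0 ≤ f' x) : MonotoneOn f (Ici a) :=
  monotoneOn_of_hasDerivWithinAt_nonneg (convex_Ici a)
    (fun x hx => (hf x hx).continuousAt.continuousWithinAt)
    (fun x hx => (hf x (interior_subset hx)).hasDerivWithinAt) (by rwa [interior_Ici])

theorem antitoneOn_Ici_of_hasDerivAt_nonpos (hf : ∀ x ∈ Ici a, HasDerivAt f (f' x) x)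
    (hf' : ∀ x ∈ Ioi a, f' x ≤ 0) : AntitoneOn f (Ici a) :=
  antitoneOn_of_hasDerivWithinAt_nonpos (convex_Ici a)
    (fun x hx => (hf x hx).continuousAt.continuousWithinAt)
    (fun x hx => (hf x (interior_subset hx)).hasDerivWithinAt) (by rwa [interior_Ici])

theorem AntitoneOn.nonneg_of_tendsto_zero_le {q e : ℝ → ℝ} (hq : AntitoneOn q (Ici a))
    (he : Tendsto e atTop (𝓝 0)) (hle : ∀ᶠ x in atTop, e x ≤ q x) :
    ∀ x ∈ Ici a, 0 ≤ q x :=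
  fun x hx => le_of_tendsto he <| (hle.and (eventually_ge_atTop x)).mono fun _ hy =>
    hy.1.trans (hq hx (mem_Ici.2 (le_trans hx hy.2)) hy.2)

theorem tendsto_atTop_of_hasDerivAt_ge {g g' : ℝ → ℝ}
    (hf : ∀ᶠ x in atTop, HasDerivAt f (f' x) x) (hg : ∀ᶠ x in atTop, HasDerivAt g (g' x) x)
    (hle : ∀ᶠ x in atTop, g' x ≤ f' x) (hg_top : Tendsto g atTop atTop) :
    Tendsto f atTop atTop := by
  obtain ⟨a, ha⟩ := (hf.and (hg.and hle)).exists_forall_of_atTop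
  have hmono : MonotoneOn (fun x => f x - g x) (Ici a) :=
    monotoneOn_Ici_of_hasDerivAt_nonneg (fun x hx => (ha x hx).1.fun_sub (ha x hx).2.1)
      fun x hx => sub_nonneg.2 (ha x (Ioi_subset_Ici_self hx)).2.2
  refine tendsto_atTop_mono' _ ?_ (tendsto_atTop_add_const_right _ (f a - g a) hg_top)
  filter_upwards [eventually_ge_atTop a] with x hx
  have := hmono self_mem_Ici hx hx
  linarith

theorem eventually_le_neg_or_div_le_of_hasDerivAt_le {k : ℝ} (hk : 0 ≤ k) (ha : 0 < a)
    (hf : ∀ x ∈ Ici a, HasDerivAt f (f' x) x) (hf' : ∀ x ∈ Ici a, f' x ≤ -k / x ^ 2) :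
    (∃ d > 0, ∀ᶠ x in atTop, f x ≤ -d) ∨ ∀ x ∈ Ici a, k / x ≤ f x := by
  by_cases hpos : ∀ x ∈ Ici a, 0 ≤ f x
  · right
    have hq : AntitoneOn (fun x => f x - k / x) (Ici a) := by
      refine antitoneOn_Ici_of_hasDerivAt_nonpos (f' := fun x => f' x + k / x ^ 2)
        (fun x hx => ?_) fun x hx => ?_
      · simpa [div_eq_mul_inv] using
          (hf x hx).fun_sub ((hasDerivAt_inv (ha.trans_le hx).ne').const_mul k)
      · have := hf' x (Ioi_subset_Ici_self hx)
        rw [neg_div] at this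
        linarith
    have hq_nonneg := hq.nonneg_of_tendsto_zero_le (e := fun x => -k / x)
      (tendsto_const_nhds.div_atTop tendsto_id)
      ((eventually_ge_atTop a).mono fun x hx => by linarith [hpos x hx, neg_div x k])
    exact fun x hx => by linarith [hq_nonneg x hx]
  · left
    push Not at hpos
    obtain ⟨x₀, hx₀, hneg⟩ := hpos
    have hanti : AntitoneOn f (Ici a) := antitoneOn_Ici_of_hasDerivAt_nonpos hf fun x hx =>
      (hf' x (Ioi_subset_Ici_self hx)).trans (by rw [neg_div]; exact neg_nonpos.2 (by positivity))
    exact ⟨-f x₀, by linarith, (eventually_ge_atTop x₀).mono fun x hx => by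
      simpa using hanti hx₀ (mem_Ici.2 (le_trans hx₀ hx)) hx⟩

end Monotonicity

def SolvesYangMills (W : ℝ → ℝ) (r1 : ℝ) : Prop :=
  ∀ r ∈ Ici r1, (1 - 1 / r) * deriv (deriv W) r + (1 / r ^ 2) * deriv W r
    + (1 / r ^ 2) * W r * (1 - (W r) ^ 2) = 0

namespace SolvesYangMills

variable {W : ℝ → ℝ} {r1 : ℝ}

theorem neg (hode : SolvesYangMills W r1) : SolvesYangMills (fun r => -W r) r1 := by
  intro r hr
  simp only [deriv.fun_neg']
  linear_combination -hode r hr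

theorem hasDerivAt_flux (hreg : ContDiffOn ℝ 2 W (Ici r1)) (hode : SolvesYangMills W r1)
    {r : ℝ} (hr : r1 < r) (hr0 : r ≠ 0) :
    HasDerivAt (fun s => (1 - 1 / s) * deriv W s) (-(W r * (1 - W r ^ 2)) / r ^ 2) r := by
  have hW'_reg : ContDiffOn ℝ 1 (deriv W) (Ioi r1) :=
    (hreg.mono Ioi_subset_Ici_self).deriv_of_isOpen isOpen_Ioi (by norm_num)
  have hW' : HasDerivAt (deriv W) (deriv (deriv W) r) r :=
    ((hW'_reg.differentiableOn one_ne_zero).differentiableAt (Ioi_mem_nhds hr)).hasDerivAt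
  have hw : HasDerivAt (fun s : ℝ => 1 - 1 / s) (1 / r ^ 2) r := by
    simpa using (hasDerivAt_inv hr0).const_sub 1
  exact (hw.fun_mul hW').congr_deriv (by linear_combination hode r hr.le)

theorem eventually_deriv_le_neg_or_div_le (hreg : ContDiffOn ℝ 2 W (Ici r1))
    (hode : SolvesYangMills W r1) {k : ℝ} (hk : 0 < k)
    (hF : ∀ᶠ r in atTop, k < W r * (1 - W r ^ 2)) :
    (∃ d > 0, ∀ᶠ r in atTop, deriv W r ≤ -d) ∨ ∀ᶠ r in atTop, k / r ≤ deriv W r := by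
  obtain ⟨R, hR⟩ := (hF.and (eventually_gt_atTop (max r1 1))).exists_forall_of_atTop
  have hlarge : ∀ x ∈ Ici R, r1 < x ∧ 1 < x := fun x hx => max_lt_iff.1 (hR x hx).2
  have hpos : ∀ x ∈ Ici R, 0 < x := fun x hx => one_pos.trans (hlarge x hx).2
  have hweight : ∀ x ∈ Ici R, 0 < 1 - 1 / x ∧ 1 - 1 / x ≤ 1 := fun x hx =>
    ⟨by rw [sub_pos, div_lt_one (hpos x hx)]; exact (hlarge x hx).2,
      sub_le_self _ (one_div_pos.2 (hpos x hx)).le⟩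
  have hflux' : ∀ x ∈ Ici R, -(W x * (1 - W x ^ 2)) / x ^ 2 ≤ -k / x ^ 2 := fun x hx => by
    rw [div_le_div_iff_of_pos_right (pow_pos (hpos x hx) 2)]
    linarith [(hR x hx).1]
  rcases eventually_le_neg_or_div_le_of_hasDerivAt_le hk.le (hpos R self_mem_Ici)
    (fun x hx => hasDerivAt_flux hreg hode (hlarge x hx).1 (hpos x hx).ne') hflux'
    with ⟨d, hd, hflux⟩ | hflux
  · refine Or.inl ⟨d, hd, ?_⟩
    filter_upwards [hflux, eventually_ge_atTop R] with x hx hxR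
    obtain ⟨h0, h1⟩ := hweight x hxR
    nlinarith
  · refine Or.inr ?_
    filter_upwards [eventually_ge_atTop R] with x hxR
    obtain ⟨h0, h1⟩ := hweight x hxR
    have hkx : 0 < k / x := div_pos hk (hpos x hxR)
    nlinarith [hflux x hxR]

theorem limit_mul_one_sub_sq_nonpos {l : ℝ} (hreg : ContDiffOn ℝ 2 W (Ici r1))
    (hode : SolvesYangMills W r1) (hlim : Tendsto W atTop (𝓝 l)) : l * (1 - l ^ 2) ≤ 0 := by
  by_contra! hc
  have hF : ∀ᶠ r in atTop, l * (1 - l ^ 2) / 2 < W r * (1 - W r ^ 2) :=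
    (hlim.mul (tendsto_const_nhds.sub (hlim.pow 2))).eventually
      (eventually_gt_nhds (by linarith))
  have hW : ∀ᶠ r in atTop, HasDerivAt W (deriv W r) r :=
    (eventually_gt_atTop r1).mono fun r hr =>
      ((hreg.differentiableOn (by norm_num)).differentiableAt (Ici_mem_nhds hr)).hasDerivAt
  rcases eventually_deriv_le_neg_or_div_le hreg hode (half_pos hc) hF with ⟨d, hd, hW'⟩ | hW'
  · refine not_tendsto_atTop_of_tendsto_nhds hlim.neg <| tendsto_atTop_of_hasDerivAt_ge
      (g := fun x => d * x) (hW.mono fun x hx => hx.fun_neg)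
      (Eventually.of_forall fun x => (hasDerivAt_id x).const_mul d)
      (hW'.mono fun x hx => by simp only [mul_one]; linarith) (tendsto_id.const_mul_atTop hd)
  · exact not_tendsto_atTop_of_tendsto_nhds hlim <| tendsto_atTop_of_hasDerivAt_ge
      (g := fun x => l * (1 - l ^ 2) / 2 * log x) hW
      ((eventually_gt_atTop 0).mono fun x hx => (hasDerivAt_log hx.ne').const_mul _)
      (hW'.mono fun x hx => by rwa [← div_eq_mul_inv])
      (tendsto_log_atTop.const_mul_atTop (half_pos hc))

end SolvesYangMills

theorem limit_classification_general
    (W : ℝ → ℝ) (r1 l : ℝ)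
    (hreg : ContDiffOn ℝ 2 W (Ici r1))
    (hode : ∀ r ∈ Ici r1,
      (1 - 1 / r) * deriv (deriv W) r + (1 / r ^ 2) * deriv W r
        + (1 / r ^ 2) * W r * (1 - (W r) ^ 2) = 0)
    (hlim : Tendsto W atTop (nhds l)) :
    l = -1 ∨ l = 0 ∨ l = 1 := by
  have h₁ := SolvesYangMills.limit_mul_one_sub_sq_nonpos hreg hode hlim
  have h₂ := SolvesYangMills.limit_mul_one_sub_sq_nonpos hreg.neg
    (SolvesYangMills.neg hode) hlim.neg
  have h : (l + 1) * (l * (l - 1)) = 0 := by nlinarith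
  rcases mul_eq_zero.1 h with h | h
  · exact Or.inl (by linarith)
  rcases mul_eq_zero.1 h with h | h
  · exact Or.inr (Or.inl h)
  · exact Or.inr (Or.inr (by linarith))

theorem limit_classification
    (W : ℝ → ℝ) (r1 l : ℝ) (hr1 : 1 < r1)
    (hreg : ContDiffOn ℝ 2 W (Ici r1))
    (hode : ∀ r ∈ Ici r1,
      (1 - 1 / r) * deriv (deriv W) r + (1 / r ^ 2) * deriv W r
        + (1 / r ^ 2) * W r * (1 - (W r) ^ 2) = 0)
    (hbd : ∀ r ∈ Ici r1, |W r| ≤ 1)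
    (hlim : Tendsto W atTop (nhds l)) :
    l = -1 ∨ l = 0 ∨ l = 1 :=
  limit_classification_general W r1 l hreg hode hlim
end

section
/- Let W : [1, ∞) → ℝ be continuous with |W(r)| ≤ a for 1 ≤ r ≤ 3, where 0 < a ≤ (1+√3)/(5+3√3), and |W(r)| ≤ 1 - 1/r - 1/(2r^2) for r ≥ 3. Then ∫_1^∞ (3 W(r)^2 - 1)/r^2 dr < 0. -/
/-!
On `[1, 3]` the integrand is at most `(3a² - 1)/r²`, which integrates to `(2/3)(3a² - 1)`.
On `[3, ∞)` the bound `|W r| ≤ 1 - 1/r` makes it at most `(3(1 - 1/r)² - 1)/r²`, the derivative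
of `(1 - 1/r)³ + 1/r`, so that piece contributes at most `1 - (2/3)³ - 1/3 = 10/27`.
The total is at most `2a² - 8/27`, which is negative because `a < 1/3`.
-/

open Real Set MeasureTheory Filter Topology

theorem integrableOn_Ioi_div_sq {f : ℝ → ℝ} {c M : ℝ} (hc : 0 < c)
    (hf : ContinuousOn f (Ioi c)) (hM : ∀ r ∈ Ioi c, |f r| ≤ M) :
    IntegrableOn (fun r => f r / r ^ 2) (Ioi c) := by
  refine ((integrableOn_Ioi_rpow_of_lt (by norm_num : (-2 : ℝ) < -1) hc).const_mul M).mono'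
    ((hf.div (continuousOn_id.pow 2) fun r hr =>
      (pow_pos (hc.trans hr) 2).ne').aestronglyMeasurable measurableSet_Ioi) ?_
  filter_upwards [ae_restrict_mem measurableSet_Ioi] with r hr
  have hr0 : 0 < r := hc.trans hr
  rw [norm_div, Real.norm_eq_abs, norm_pow, Real.norm_eq_abs, abs_of_pos hr0,
    rpow_neg hr0.le, rpow_two, ← div_eq_mul_inv]
  exact div_le_div_of_nonneg_right (hM r hr) (by positivity)

theorem intervalIntegrable_const_div_sq {x y : ℝ} (hx : 0 < x) (hy : 0 < y) (C : ℝ) :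
    IntervalIntegrable (fun r => C / r ^ 2) volume x y :=
  (continuousOn_const.div (continuousOn_id.pow 2) fun _ hr =>
    (pow_pos ((lt_min hx hy).trans_le hr.1) 2).ne').intervalIntegrable

theorem integral_const_div_sq {x y : ℝ} (hx : 0 < x) (hy : 0 < y) (C : ℝ) :
    ∫ r in x..y, C / r ^ 2 = C * (x⁻¹ - y⁻¹) := by
  rw [intervalIntegral.integral_eq_sub_of_hasDerivAt (f := fun r => -C * r⁻¹)
    (fun r hr => ((hasDerivAt_inv ((lt_min hx hy).trans_le hr.1).ne').const_mul (-C)).congr_deriv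
      (by ring)) (intervalIntegrable_const_div_sq hx hy C)]
  ring

theorem abs_three_mul_sq_sub_one_le_two {w : ℝ} (hw : |w| ≤ 1) : |3 * w ^ 2 - 1| ≤ 2 := by
  have h := (sq_le_one_iff_abs_le_one w).mpr hw
  rw [abs_le]
  constructor <;> nlinarith [sq_nonneg w]

theorem three_mul_sq_sub_one_div_sq_le {w b : ℝ} (hw : |w| ≤ b) (r : ℝ) :
    (3 * w ^ 2 - 1) / r ^ 2 ≤ (3 * b ^ 2 - 1) / r ^ 2 :=
  div_le_div_of_nonneg_right
    (by nlinarith [sq_le_sq.mpr (hw.trans (le_abs_self b))]) (sq_nonneg r)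

theorem abs_one_sub_one_div_le_one {r : ℝ} (hr : 1 ≤ r) : |1 - 1 / r| ≤ 1 := by
  have h0 : 0 < 1 / r := by positivity
  have h1 : 1 / r ≤ 1 := (div_le_one (by linarith)).mpr hr
  rw [abs_le]
  constructor <;> linarith

theorem integrableOn_Ioi_three_mul_one_sub_one_div_sq_sub_one_div_sq {c : ℝ} (hc : 1 ≤ c) :
    IntegrableOn (fun r => (3 * (1 - 1 / r) ^ 2 - 1) / r ^ 2) (Ioi c) := by
  have hr0 : ∀ r ∈ Ioi c, r ≠ 0 := fun r hr => (zero_lt_one.trans_le (hc.trans hr.out.le)).ne'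
  exact integrableOn_Ioi_div_sq (zero_lt_one.trans_le hc) (by fun_prop (disch := assumption))
    fun r hr =>
      abs_three_mul_sq_sub_one_le_two (abs_one_sub_one_div_le_one (hc.trans hr.out.le))

theorem integral_Ioi_three_mul_one_sub_one_div_sq_sub_one_div_sq {c : ℝ} (hc : 1 ≤ c) :
    ∫ r in Ioi c, (3 * (1 - 1 / r) ^ 2 - 1) / r ^ 2 = 1 - (1 - 1 / c) ^ 3 - 1 / c := by
  have hderiv : ∀ r ∈ Ici c, HasDerivAt (fun r => (1 - 1 / r) ^ 3 + 1 / r)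
      ((3 * (1 - 1 / r) ^ 2 - 1) / r ^ 2) r := by
    intro r hr
    have hr0 : r ≠ 0 := (zero_lt_one.trans_le (hc.trans hr)).ne'
    have hinv : HasDerivAt (fun r : ℝ => 1 / r) (-(r ^ 2)⁻¹) r := by
      simpa only [one_div] using hasDerivAt_inv hr0
    refine (((hinv.const_sub 1).pow 3).add hinv).congr_deriv ?_
    push_cast
    ring
  have hlim : Tendsto (fun r : ℝ => (1 - 1 / r) ^ 3 + 1 / r) atTop (𝓝 1) := by
    have h0 : Tendsto (fun r : ℝ => 1 / r) atTop (𝓝 0) := by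
      simpa only [one_div] using tendsto_inv_atTop_zero
    simpa using ((h0.const_sub 1).pow 3).add h0
  rw [integral_Ioi_of_hasDerivAt_of_tendsto' hderiv
    (integrableOn_Ioi_three_mul_one_sub_one_div_sq_sub_one_div_sq hc) hlim]
  ring

theorem potential_integral_negative
    (W : ℝ → ℝ) (a : ℝ) (ha : 0 < a)
    (ha1 : a ≤ (1 + Real.sqrt 3) / (5 + 3 * Real.sqrt 3))
    (hcont : ContinuousOn W (Ici 1))
    (hbd1 : ∀ r ∈ Icc (1:ℝ) 3, |W r| ≤ a)
    (hbd2 : ∀ r : ℝ, 3 ≤ r → |W r| ≤ 1 - 1 / r - 1 / (2 * r ^ 2)) :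
    ∫ r in Ioi (1:ℝ), (3 * (W r) ^ 2 - 1) / r ^ 2 < 0 := by
  have ha3 : a < 1 / 3 := ha1.trans_lt <| by
    rw [div_lt_div_iff₀ (by positivity) (by norm_num)]
    linarith
  have hW_tail : ∀ r, 3 ≤ r → |W r| ≤ 1 - 1 / r := fun r hr => by
    linarith [hbd2 r hr, show 0 < 1 / (2 * r ^ 2) by positivity]
  have hW_le_one : ∀ r ∈ Ioi (1:ℝ), |W r| ≤ 1 := fun r hr => by
    rcases le_total r 3 with hr3 | hr3
    · linarith [hbd1 r ⟨hr.out.le, hr3⟩]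
    · linarith [hW_tail r hr3, show 0 < 1 / r by positivity]
  have hint : IntegrableOn (fun r => (3 * W r ^ 2 - 1) / r ^ 2) (Ioi 1) :=
    integrableOn_Ioi_div_sq one_pos
      ((continuousOn_const.mul ((hcont.mono Ioi_subset_Ici_self).pow 2)).sub continuousOn_const)
      fun r hr => abs_three_mul_sq_sub_one_le_two (hW_le_one r hr)
  have h_inner : ∫ r in (1:ℝ)..3, (3 * W r ^ 2 - 1) / r ^ 2 ≤ (3 * a ^ 2 - 1) * (1⁻¹ - 3⁻¹) :=
    calc _ ≤ ∫ r in (1:ℝ)..3, (3 * a ^ 2 - 1) / r ^ 2 :=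
          intervalIntegral.integral_mono_on (by norm_num)
            ((intervalIntegrable_iff_integrableOn_Ioc_of_le (by norm_num)).2
              (hint.mono_set Ioc_subset_Ioi_self))
            (intervalIntegrable_const_div_sq one_pos three_pos _)
            fun r hr => three_mul_sq_sub_one_div_sq_le (hbd1 r hr) r
      _ = _ := integral_const_div_sq one_pos three_pos _
  have h_outer : ∫ r in Ioi (3:ℝ), (3 * W r ^ 2 - 1) / r ^ 2 ≤ 10 / 27 :=
    calc _ ≤ ∫ r in Ioi (3:ℝ), (3 * (1 - 1 / r) ^ 2 - 1) / r ^ 2 :=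
          setIntegral_mono_on (hint.mono_set (Ioi_subset_Ioi (by norm_num)))
            (integrableOn_Ioi_three_mul_one_sub_one_div_sq_sub_one_div_sq (by norm_num))
            measurableSet_Ioi fun r hr => three_mul_sq_sub_one_div_sq_le (hW_tail r hr.out.le) r
      _ = 10 / 27 := by
        rw [integral_Ioi_three_mul_one_sub_one_div_sq_sub_one_div_sq (by norm_num)]
        norm_num
  rw [← intervalIntegral.integral_interval_add_Ioi hint
    (hint.mono_set (Ioi_subset_Ioi (by norm_num : (1:ℝ) ≤ 3)))]
  nlinarith
end
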